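/- Let y = (y_1,…,y_e) ∈ ℤ^e and j ∈ {1,…,e}, and suppose y_{j+1} = y_j + δ_{j,e}, where the index j+1 is read as 1 when j = e (so the hypothesis reads y_1 = y_e + 1 when j = e). Let σ be the stable sorting permutation of y and let a ∈ {1,…,e} with σ(a) = j. Then a < e and σ(a+1) equals j+1 if j < e, and equals 1 if j = e. Equivalently, σ ∘ s_a = s̄_j ∘ σ, where s_a is the transposition (a, a+1) and s̄_j is the transposition (j, j+1) for j < e and (1, e) for j = e. -/
import Mathlib


/-- `σ` is the stable sorting permutation of `y`: `y_{σ(j)} ≤ y_{σ(j+1)}` for all `j`,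
with equality only if `σ(j) < σ(j+1)`.  (Such a permutation is unique.) -/
def IsStableSorting (e : ℕ) (y : Fin e → ℤ) (σ : Equiv.Perm (Fin e)) : Prop :=
  ∀ (j : ℕ) (hj : j + 1 < e),
    y (σ ⟨j, by omega⟩) ≤ y (σ ⟨j + 1, hj⟩) ∧
      (y (σ ⟨j, by omega⟩) = y (σ ⟨j + 1, hj⟩) → σ ⟨j, by omega⟩ < σ ⟨j + 1, hj⟩)

def SortRel {e : ℕ} (y : Fin e → ℤ) (i k : Fin e) : Prop :=
  y i < y k ∨ (y i = y k ∧ i < k)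

lemma sortRel_asymm {e : ℕ} {y : Fin e → ℤ} {i k : Fin e}
    (h1 : SortRel y i k) (h2 : SortRel y k i) : False := by
  rcases h1 with h1 | ⟨h1e, h1l⟩ <;> rcases h2 with h2 | ⟨h2e, h2l⟩
  · exact absurd h2 (not_lt.2 h1.le)
  · exact absurd h1 (by rw [h2e]; exact lt_irrefl _)
  · exact absurd h2 (by rw [h1e]; exact lt_irrefl _)
  · exact absurd (h1l.trans h2l) (lt_irrefl _)

lemma isStableSorting_mono {e : ℕ} {y : Fin e → ℤ} {σ : Equiv.Perm (Fin e)}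
    (hσ : IsStableSorting e y σ) :
    ∀ (p q : ℕ) (hq : q < e) (hpq : p < q),
      SortRel y (σ ⟨p, by omega⟩) (σ ⟨q, hq⟩) := by
  have hstep : ∀ (p : ℕ) (hp : p + 1 < e),
      SortRel y (σ ⟨p, by omega⟩) (σ ⟨p + 1, hp⟩) := by
    intro p hp
    rcases hσ p hp with ⟨h1, h2⟩
    rcases lt_or_eq_of_le h1 with h | h
    · exact Or.inl h
    · exact Or.inr ⟨h, h2 h⟩
  intro p q hq hpq
  induction q with
  | zero => omega
  | succ n ih =>
    rcases Nat.lt_or_ge p n with h | h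
    · have hn : n < e := by omega
      have h1 := ih hn h
      have h2 := hstep n hq
      rcases h1 with h1 | ⟨h1e, h1l⟩ <;> rcases h2 with h2 | ⟨h2e, h2l⟩
      · exact Or.inl (h1.trans h2)
      · exact Or.inl (lt_of_lt_of_eq h1 h2e)
      · exact Or.inl (lt_of_eq_of_lt h1e h2)
      · exact Or.inr ⟨h1e.trans h2e, h1l.trans h2l⟩
    · have hpn : p = n := by omega
      subst hpn
      exact hstep p hq

lemma stableSorting_adjacent {e : ℕ} {y : Fin e → ℤ} {σ : Equiv.Perm (Fin e)}
    (hσ : IsStableSorting e y σ) (x t : Fin e)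
    (hrt : SortRel y x t)
    (hadj : ∀ m : Fin e, SortRel y x m → SortRel y m t → False)
    (a : Fin e) (ha : σ a = x) :
    ∃ h : (a : ℕ) + 1 < e, σ ⟨(a : ℕ) + 1, h⟩ = t := by
  obtain ⟨b, hb⟩ : ∃ b, σ b = t := ⟨σ.symm t, σ.apply_symm_apply t⟩
  have hab : (a : ℕ) < (b : ℕ) := by
    by_contra hc
    rcases Nat.lt_or_ge (b : ℕ) (a : ℕ) with h | h
    · have := isStableSorting_mono hσ b a a.isLt h
      rw [Fin.eta, Fin.eta, ha, hb] at this
      exact sortRel_asymm hrt this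
    · have hba : a = b := Fin.ext (by omega)
      rw [hba, hb] at ha
      exact sortRel_asymm hrt (ha ▸ hrt)
  have hb1 : (b : ℕ) = (a : ℕ) + 1 := by
    by_contra hc
    have hlt : (a : ℕ) + 1 < (b : ℕ) := by omega
    have h1 := isStableSorting_mono hσ a ((a : ℕ) + 1) (by omega) (by omega)
    have h2 := isStableSorting_mono hσ ((a : ℕ) + 1) b b.isLt hlt
    rw [Fin.eta, ha] at h1
    rw [Fin.eta, hb] at h2
    exact hadj _ h1 h2
  have hae : (a : ℕ) + 1 < e := hb1 ▸ b.isLt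
  refine ⟨hae, ?_⟩
  have hba : (⟨(a : ℕ) + 1, hae⟩ : Fin e) = b := Fin.ext hb1.symm
  rw [hba, hb]
/-- If `y_{j+1} = y_j + δ_{j,e}` (index `j+1` read as `1` when `j = e`), `σ` is the stable
sorting permutation of `y`, and `σ(a) = j`, then `a < e`, `σ(a+1) = j+1` (read as `1` when
`j = e`), and `σ ∘ s_a = s̄_j ∘ σ`. -/
theorem stableSorting_succ (e : ℕ) (he : 1 ≤ e) (y : Fin e → ℤ) (j : ℕ)
    (hj1 : 1 ≤ j) (hj2 : j ≤ e)
    (hylt : ∀ hlt : j < e, y ⟨j, hlt⟩ = y ⟨j - 1, by omega⟩)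
    (hye : j = e → y ⟨0, by omega⟩ = y ⟨e - 1, by omega⟩ + 1)
    (σ : Equiv.Perm (Fin e)) (hσ : IsStableSorting e y σ)
    (a : Fin e) (ha : σ a = ⟨j - 1, by omega⟩) :
    ∃ h : (a : ℕ) + 1 < e,
      σ ⟨(a : ℕ) + 1, h⟩ =
        (if hlt : j < e then (⟨j, hlt⟩ : Fin e) else ⟨0, by omega⟩) ∧
      σ * Equiv.swap a ⟨(a : ℕ) + 1, h⟩ =
        (if hlt : j < e then Equiv.swap ⟨j - 1, by omega⟩ ⟨j, hlt⟩
          else Equiv.swap ⟨0, by omega⟩ ⟨e - 1, by omega⟩) * σ := by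
  by_cases hlt : j < e
  · obtain ⟨h, hs⟩ := stableSorting_adjacent hσ ⟨j - 1, by omega⟩ ⟨j, hlt⟩
      (Or.inr ⟨(hylt hlt).symm, by simp only [Fin.lt_def, Fin.val_mk]; omega⟩)
      (by
        rintro m (h1 | ⟨h1e, h1l⟩) (h2 | ⟨h2e, h2l⟩) <;>
          have hy := hylt hlt <;>
          (try simp only [Fin.lt_def, Fin.val_mk] at *) <;> omega)
      a ha
    rw [dif_pos hlt, dif_pos hlt]
    exact ⟨h, hs, by simp only [Equiv.mul_swap_eq_swap_mul, ha, hs]⟩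
  · have hje : j = e := by omega
    have ha' : σ a = ⟨e - 1, by omega⟩ := ha.trans (Fin.ext (show j - 1 = e - 1 by omega))
    have hy := hye hje
    have he2 : 2 ≤ e := by
      by_contra hc
      have h0 : (⟨0, by omega⟩ : Fin e) = ⟨e - 1, by omega⟩ := Fin.ext (show 0 = e - 1 by omega)
      rw [h0] at hy
      omega
    obtain ⟨h, hs⟩ := stableSorting_adjacent hσ ⟨e - 1, by omega⟩ ⟨0, by omega⟩
      (Or.inl (by omega))
      (by
        rintro m (h1 | ⟨h1e, h1l⟩) (h2 | ⟨h2e, h2l⟩) <;>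
          (try simp only [Fin.lt_def, Fin.val_mk] at *) <;> omega)
      a ha'
    rw [dif_neg hlt, dif_neg hlt]
    exact ⟨h, hs, by
      simp only [Equiv.mul_swap_eq_swap_mul, ha', hs]
      congr 1
      exact Equiv.swap_comm _ _⟩
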